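/- arXiv:2503.15963 — 2 statements merged into one kernel-verified Lean document; each statement's English description precedes it below -/
import Mathlib

section
/- Let ε > 0 and let (I_n)_{n≥0} be nonnegative real numbers satisfying I_n ≥ I_{n+1} + ε⁻¹ I_{n+2} for all n ≥ 0. Then for all integers n ≥ 2 and p ≥ 0, I_{n+p} ≤ (1+φ(ε))^{−(n−2)} I_p. Moreover (1+φ(ε))² = 1 + ε⁻¹ + φ(ε) > 1 + ε⁻¹. -/
open MeasureTheory ProbabilityTheory ENNReal
open scoped RealInnerProductSpace Classical

noncomputable section

/-- Euclidean space `ℝ^d`. -/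
abbrev Ed (d : ℕ) : Type := EuclideanSpace ℝ (Fin d)

/-- Relative entropy `H(ν | μ)`: `∫ log (dν/dμ) dν` when `ν ≪ μ` and the
log-likelihood ratio is integrable, `∞` otherwise. -/
def relEnt {α : Type*} [MeasurableSpace α] (ν μ : Measure α) : ℝ≥0∞ :=
  if ν ≪ μ ∧ Integrable (MeasureTheory.llr ν μ) ν then
    ENNReal.ofReal (∫ x, MeasureTheory.llr ν μ x ∂ν) else ⊤

/-- `P` is a coupling of `μ` and `ν`. -/
def isCoupling {α β : Type*} [MeasurableSpace α] [MeasurableSpace β]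
    (P : Measure (α × β)) (μ : Measure α) (ν : Measure β) : Prop :=
  P.map Prod.fst = μ ∧ P.map Prod.snd = ν

/-- Squared 2-Wasserstein distance. -/
def W2sq {d : ℕ} (μ ν : Measure (Ed d)) : ℝ≥0∞ :=
  ⨅ (P : Measure (Ed d × Ed d)) (_ : isCoupling P μ ν),
    ∫⁻ p, ENNReal.ofReal (‖p.1 - p.2‖ ^ 2) ∂P

/-- Quadratic transportation cost inequality `T2(ρ)`. -/
def SatT2 {d : ℕ} (μ : Measure (Ed d)) (ρ : ℝ) : Prop :=
  ∀ ν : Measure (Ed d), IsProbabilityMeasure ν →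
    (1 / 2 : ℝ≥0∞) * W2sq ν μ ≤ ENNReal.ofReal ρ * relEnt ν μ

/-- Transport of a measure by a Markov kernel: `μK`. -/
def mbind {d : ℕ} (μ : Measure (Ed d)) (K : Kernel (Ed d) (Ed d)) : Measure (Ed d) :=
  μ.bind fun x => K x

/-- `K` is the Gibbs kernel with potential `W`: `K(x,dy) = e^{-W(x,y)} dy`,
with `W` measurable and `y ↦ W(x,y)` of class `C¹`. -/
def IsGibbs {d : ℕ} (Wf : Ed d → Ed d → ℝ) (K : Kernel (Ed d) (Ed d)) : Prop :=
  Measurable (Function.uncurry Wf) ∧ (∀ x, ContDiff ℝ 1 (Wf x)) ∧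
    ∀ x, K x = (volume : Measure (Ed d)).withDensity fun y => ENNReal.ofReal (Real.exp (-Wf x y))

/-- Fisher information cost of a Gibbs kernel. -/
def fisherCost {d : ℕ} (Wf : Ed d → Ed d → ℝ) (K : Kernel (Ed d) (Ed d)) (x₁ x₂ : Ed d) : ℝ≥0∞ :=
  ∫⁻ y, ENNReal.ofReal (‖gradient (Wf x₁) y - gradient (Wf x₂) y‖ ^ 2) ∂(K x₁)

/-- Local log-Sobolev inequality `LS_loc(ρ)` for a Gibbs kernel. -/
def LSloc {d : ℕ} (Wf : Ed d → Ed d → ℝ) (K : Kernel (Ed d) (Ed d)) (ρ : ℝ) : Prop :=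
  ∀ x₁ x₂ : Ed d, relEnt (K x₁) (K x₂) ≤ ENNReal.ofReal (ρ / 2) * fisherCost Wf K x₁ x₂

/-- Fisher–Lipschitz inequality `J₂(κ)` for a Gibbs kernel. -/
def FisherLip {d : ℕ} (Wf : Ed d → Ed d → ℝ) (K : Kernel (Ed d) (Ed d)) (κ : ℝ) : Prop :=
  ∀ x₁ x₂ : Ed d, fisherCost Wf K x₁ x₂ ≤ ENNReal.ofReal (κ ^ 2 * ‖x₁ - x₂‖ ^ 2)

/-- Entropic transport cost `E_K(ν | μ)`. -/
def entCost {d : ℕ} (K : Kernel (Ed d) (Ed d)) (ν μ : Measure (Ed d)) : ℝ≥0∞ :=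
  ⨅ (P : Measure (Ed d × Ed d)) (_ : isCoupling P ν μ),
    ∫⁻ p, relEnt (K p.1) (K p.2) ∂P

/-- `φ(ε) = ε⁻¹ / (√(1/4 + ε⁻¹) + 1/2)`. -/
def phi (ε : ℝ) : ℝ := ε⁻¹ / (Real.sqrt (1 / 4 + ε⁻¹) + 1 / 2)

/-- Application of a matrix to a vector of `ℝ^d`. -/
def mApp {d : ℕ} (M : Matrix (Fin d) (Fin d) ℝ) (x : Ed d) : Ed d :=
  Matrix.toEuclideanLin M x

/-- Spectral norm of a matrix. -/
def spec {d : ℕ} (M : Matrix (Fin d) (Fin d) ℝ) : ℝ :=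
  ‖LinearMap.toContinuousLinearMap (Matrix.toEuclideanLin M)‖

/-- Loewner order on matrices. -/
def loewnerLE {d : ℕ} (A B : Matrix (Fin d) (Fin d) ℝ) : Prop := (B - A).PosSemidef

/-- Principal square root of a positive semidefinite matrix (junk value otherwise). -/
def msqrt {d : ℕ} (A : Matrix (Fin d) (Fin d) ℝ) : Matrix (Fin d) (Fin d) ℝ :=
  if h : A.PosSemidef then
    (h.1.eigenvectorUnitary : Matrix (Fin d) (Fin d) ℝ) *
      Matrix.diagonal (Real.sqrt ∘ h.1.eigenvalues) *
      (star h.1.eigenvectorUnitary : Matrix (Fin d) (Fin d) ℝ) else 0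

/-- Smallest eigenvalue of a symmetric matrix (junk value otherwise). -/
def lmin {d : ℕ} (A : Matrix (Fin d) (Fin d) ℝ) : ℝ :=
  if h : A.IsHermitian then ⨅ i, h.eigenvalues i else 0

/-- Largest eigenvalue of a symmetric matrix (junk value otherwise). -/
def lmax {d : ℕ} (A : Matrix (Fin d) (Fin d) ℝ) : ℝ :=
  if h : A.IsHermitian then ⨆ i, h.eigenvalues i else 0

/-- Riccati map `Ricc_ϖ(s) = (I + (ϖ + s)⁻¹)⁻¹`. -/
def Ricc {d : ℕ} (ϖ s : Matrix (Fin d) (Fin d) ℝ) : Matrix (Fin d) (Fin d) ℝ :=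
  (1 + (ϖ + s)⁻¹)⁻¹

/-- Fixed point `r_ϖ = -ϖ/2 + (ϖ + (ϖ/2)²)^{1/2}` of the Riccati map. -/
def riccFix {d : ℕ} (ϖ : Matrix (Fin d) (Fin d) ℝ) : Matrix (Fin d) (Fin d) ℝ :=
  -((1 / 2 : ℝ) • ϖ) + msqrt (ϖ + ((1 / 2 : ℝ) • ϖ) ^ 2)

/-- `Ψ_γ(v) = (I + γ v γᵀ)⁻¹`. -/
def Psim {d : ℕ} (γ v : Matrix (Fin d) (Fin d) ℝ) : Matrix (Fin d) (Fin d) ℝ :=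
  (1 + γ * v * γ.transpose)⁻¹

/-- Hessian lower bound `∇²U ≥ M` (as quadratic forms). -/
def HessLB {d : ℕ} (U : Ed d → ℝ) (M : Matrix (Fin d) (Fin d) ℝ) : Prop :=
  ∀ x v : Ed d, ⟪v, mApp M v⟫ ≤ iteratedFDeriv ℝ 2 U x ![v, v]

/-- Hessian upper bound `∇²U ≤ M` (as quadratic forms). -/
def HessUB {d : ℕ} (U : Ed d → ℝ) (M : Matrix (Fin d) (Fin d) ℝ) : Prop :=
  ∀ x v : Ed d, iteratedFDeriv ℝ 2 U x ![v, v] ≤ ⟪v, mApp M v⟫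

/-- Linear-Gaussian reference potential `W(x,y) = -log g_τ(y - (α + βx))`. -/
def gaussW {d : ℕ} (a : Ed d) (β τ : Matrix (Fin d) (Fin d) ℝ) (x y : Ed d) : ℝ :=
  -Real.log ((Real.sqrt ((2 * Real.pi) ^ d * τ.det))⁻¹ *
    Real.exp (-(1 / 2) * ⟪y - (mApp β x + a), mApp τ⁻¹ (y - (mApp β x + a))⟫))

/-- Boltzmann–Gibbs measure `λ_U(dx) = e^{-U(x)} dx`. -/
def gibbsDensity {d : ℕ} (U : Ed d → ℝ) : Measure (Ed d) :=
  (volume : Measure (Ed d)).withDensity fun x => ENNReal.ofReal (Real.exp (-U x))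

/-- Conditional covariance `Σ_K(x) = (1/2) ∫∫ (y-z)(y-z)ᵀ K(x,dy) K(x,dz)`. -/
def condCov {d : ℕ} (K : Kernel (Ed d) (Ed d)) (x : Ed d) : Matrix (Fin d) (Fin d) ℝ :=
  Matrix.of fun i j =>
    (1 / 2) * ∫ p : Ed d × Ed d, (p.1 i - p.2 i) * (p.1 j - p.2 j) ∂((K x).prod (K x))

/-- Barycentric projection `K(I)(x) = ∫ y K(x,dy)`. -/
def bary {d : ℕ} (K : Kernel (Ed d) (Ed d)) (x : Ed d) : Ed d := ∫ y, y ∂(K x)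

/-- Gradient matrix of a vector field: `(i,j)` entry is `∂ᵢ hʲ(x)`. -/
def gradMat {d : ℕ} (h : Ed d → Ed d) (x : Ed d) : Matrix (Fin d) (Fin d) ℝ :=
  Matrix.of fun i j => gradient (fun x' => h x' j) x i

/-- Sinkhorn marginal flow `π_n`. -/
def piSeq {d : ℕ} (μ η : Measure (Ed d)) (K : ℕ → Kernel (Ed d) (Ed d)) (n : ℕ) :
    Measure (Ed d) :=
  if n % 2 = 0 then mbind μ (K n) else mbind η (K n)

/-- Sinkhorn bridges `𝒫_n`. -/
def PSeq {d : ℕ} (μ η : Measure (Ed d)) (K : ℕ → Kernel (Ed d) (Ed d)) (n : ℕ) :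
    Measure (Ed d × Ed d) :=
  if n % 2 = 0 then μ ⊗ₘ K n else (η ⊗ₘ K n).map Prod.swap

/-- `n`-fold composition of a Markov kernel. -/
def kpow {d : ℕ} (S : Kernel (Ed d) (Ed d)) : ℕ → Kernel (Ed d) (Ed d)
  | 0 => Kernel.id
  | n + 1 => (kpow S n) ∘ₖ S

end

/-- second-order linear recurrence inequalities yield the improved
exponential decay with rate `(1 + φ(ε))⁻¹`. -/
theorem recurrence_exponential_decay
    (ε : ℝ) (hε : 0 < ε) (I : ℕ → ℝ) (hpos : ∀ n, 0 ≤ I n)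
    (hrec : ∀ n : ℕ, I (n + 1) + ε⁻¹ * I (n + 2) ≤ I n) :
    (∀ n p : ℕ, 2 ≤ n → I (n + p) ≤ ((1 + phi ε) ^ (n - 2))⁻¹ * I p) ∧
      (1 + phi ε) ^ 2 = 1 + ε⁻¹ + phi ε ∧ 1 + ε⁻¹ < (1 + phi ε) ^ 2 := by
  have hεi : (0:ℝ) < ε⁻¹ := inv_pos.mpr hε
  have hs2 : Real.sqrt (1/4 + ε⁻¹) ^ 2 = 1/4 + ε⁻¹ := Real.sq_sqrt (by linarith)
  have hs0 : 0 ≤ Real.sqrt (1/4 + ε⁻¹) := Real.sqrt_nonneg _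
  have hsgt : 1/2 < Real.sqrt (1/4 + ε⁻¹) := by nlinarith
  have hphi : phi ε = Real.sqrt (1/4 + ε⁻¹) - 1/2 := by
    unfold phi
    rw [div_eq_iff (by linarith)]
    nlinarith
  have hphipos : 0 < phi ε := by rw [hphi]; linarith
  have hkey : phi ε ^ 2 + phi ε = ε⁻¹ := by rw [hphi]; nlinarith
  set φ := phi ε with hφ
  set c := 1 + φ with hc
  have hc1 : 1 < c := by simp [hc]; linarith
  have hc0 : 0 < c := by linarith
  have mono : ∀ n, I (n + 1) ≤ I n := by
    intro n
    have h := hrec n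
    nlinarith [hpos (n + 2)]
  have step : ∀ k, c * (I (k + 1) + φ * I (k + 2)) ≤ I k + φ * I (k + 1) := by
    intro k
    have e : c * (I (k + 1) + φ * I (k + 2))
        = (I (k + 1) + (φ ^ 2 + φ) * I (k + 2)) + φ * I (k + 1) := by
      rw [hc]; ring
    rw [hkey] at e
    rw [e]
    exact add_le_add (hrec k) le_rfl
  have main : ∀ m p : ℕ, c ^ m * (I (p + m) + φ * I (p + m + 1)) ≤ I p + φ * I (p + 1) := by
    intro m
    induction m with
    | zero => intro p; simp
    | succ m ih =>
      intro p
      have h1 := step (p + m)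
      have h2 := ih p
      calc c ^ (m + 1) * (I (p + (m + 1)) + φ * I (p + (m + 1) + 1))
          = c ^ m * (c * (I (p + m + 1) + φ * I (p + m + 2))) := by
            rw [pow_succ]; ring_nf
        _ ≤ c ^ m * (I (p + m) + φ * I (p + m + 1)) :=
            mul_le_mul_of_nonneg_left h1 (pow_nonneg (le_of_lt hc0) m)
        _ ≤ I p + φ * I (p + 1) := h2
  refine ⟨?_, by nlinarith, by nlinarith⟩
  intro n p hn
  obtain ⟨m, hm⟩ : ∃ m, n = m + 2 := ⟨n - 2, by omega⟩
  have hn2 : n - 2 = m := by omega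
  have hnp : n + p = p + m + 2 := by omega
  rw [hn2, hnp]
  -- key chain
  have h3 : c * I (p + m + 2) ≤ I (p + m + 1) + φ * I (p + m + 2) := by
    have := mono (p + m + 1)
    nlinarith [hpos (p + m + 2)]
  have h4 := main (m + 1) p
  have h5 : I (p + 1) ≤ I p := mono p
  have hcm : (0:ℝ) < c ^ (m + 1) := pow_pos hc0 _
  have h6 : c ^ (m + 1) * (c * I (p + m + 2)) ≤ c * I p := by
    calc c ^ (m + 1) * (c * I (p + m + 2))
        ≤ c ^ (m + 1) * (I (p + m + 1) + φ * I (p + m + 2)) :=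
          mul_le_mul_of_nonneg_left h3 (le_of_lt hcm)
      _ = c ^ (m + 1) * (I (p + (m + 1)) + φ * I (p + (m + 1) + 1)) := by ring_nf
      _ ≤ I p + φ * I (p + 1) := h4
      _ ≤ I p + φ * I p := by nlinarith
      _ = c * I p := by rw [hc]; ring
  have h7 : c ^ (m + 1) * I (p + m + 2) ≤ I p := by
    have := mul_le_mul_of_nonneg_left h6 (inv_pos.mpr hc0).le
    calc c ^ (m + 1) * I (p + m + 2)
        = c⁻¹ * (c ^ (m + 1) * (c * I (p + m + 2))) := by
          field_simp
      _ ≤ c⁻¹ * (c * I p) := this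
      _ = I p := by field_simp
  have h8 : c ^ m * I (p + m + 2) ≤ c ^ (m + 1) * I (p + m + 2) := by
    apply mul_le_mul_of_nonneg_right _ (hpos _)
    exact pow_le_pow_right₀ (le_of_lt hc1) (Nat.le_succ m)
  rw [inv_mul_eq_div, le_div_iff₀ (pow_pos hc0 m)]
  nlinarith [h7, h8]
end

section
/- Let γ be an invertible d×d real matrix. For positive semidefinite v define Ψ_γ(v) := (I + γ v γᵀ)⁻¹ and set ψ(γ) := (γγᵀ)⁻¹. Then: (i) Ψ_γ(Ψ_{γᵀ}(v)) = Ricc_{ψ(γ)}(v) for every positive semidefinite v; (ii) for every n ≥ 0 and every positive semidefinite v, Ψ_{γᵀ}(Ricc_{ψ(γ)}ⁿ(v)) = Ricc_{ψ(γᵀ)}ⁿ(Ψ_{γᵀ}(v)); (iii) Ψ_{γᵀ}(r_{ψ(γ)}) = r_{ψ(γᵀ)}. -/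
open MeasureTheory ProbabilityTheory ENNReal
open scoped RealInnerProductSpace Classical

namespace Matrix.PosSemidef
variable {n : Type*} [Fintype n] [DecidableEq n]

noncomputable def sqrt {A : Matrix n n ℝ} (h : A.PosSemidef) : Matrix n n ℝ :=
  (h.1.eigenvectorUnitary : Matrix n n ℝ) *
      Matrix.diagonal (Real.sqrt ∘ h.1.eigenvalues) *
      (star h.1.eigenvectorUnitary : Matrix n n ℝ)

open scoped MatrixOrder in
lemma sqrt_eq_cfc {A : Matrix n n ℝ} (hA : A.PosSemidef) : hA.sqrt = CFC.sqrt A := by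
  rw [CFC.sqrt_eq_cfc, cfc_nnreal_eq_real _ A, hA.1.cfc_eq]
  simp only [IsHermitian.cfc, Unitary.conjStarAlgAut_apply, sqrt]
  congr 3
  funext i
  simp [Real.coe_sqrt, Real.coe_toNNReal', max_eq_left (hA.eigenvalues_nonneg i)]

open scoped MatrixOrder in
lemma posSemidef_sqrt {A : Matrix n n ℝ} (hA : A.PosSemidef) : hA.sqrt.PosSemidef := by
  rw [sqrt_eq_cfc]; exact Matrix.nonneg_iff_posSemidef.mp (CFC.sqrt_nonneg A)

open scoped MatrixOrder in
lemma sqrt_mul_self {A : Matrix n n ℝ} (hA : A.PosSemidef) : hA.sqrt * hA.sqrt = A := by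
  rw [sqrt_eq_cfc]; exact CFC.sqrt_mul_sqrt_self A hA.nonneg

open scoped MatrixOrder in
lemma eq_sqrt_of_sq_eq {A B : Matrix n n ℝ} (hB : B.PosSemidef) (hA : A.PosSemidef)
    (h : B ^ 2 = A) : B = hA.sqrt := by
  rw [sqrt_eq_cfc]; exact (CFC.sqrt_unique (by rw [← sq]; exact h) hB.nonneg).symm

end Matrix.PosSemidef

namespace PsiRicc

open Matrix Polynomial

set_option linter.unusedSectionVars false

section General

variable {n : Type*} [Fintype n] [DecidableEq n]

/-- Conjugation by a unitary matrix as an algebra homomorphism. -/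
def conjA (U : Matrix n n ℝ) (h1 : star U * U = 1) (h2 : U * star U = 1) :
    Matrix n n ℝ →ₐ[ℝ] Matrix n n ℝ where
  toFun X := U * X * star U
  map_one' := by show U * 1 * star U = 1; rw [Matrix.mul_one, h2]
  map_mul' X Y := by
    show U * (X * Y) * star U = (U * X * star U) * (U * Y * star U)
    simp only [Matrix.mul_assoc]
    rw [← Matrix.mul_assoc (star U) U, h1, Matrix.one_mul]
  map_zero' := by show U * 0 * star U = 0; simp
  map_add' X Y := by
    show U * (X + Y) * star U = _
    simp [Matrix.mul_add, Matrix.add_mul]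
  commutes' r := by
    show U * (algebraMap ℝ (Matrix n n ℝ) r) * star U = _
    simp only [Algebra.algebraMap_eq_smul_one, Matrix.mul_smul, Matrix.smul_mul,
      Matrix.mul_one, Matrix.one_mul, h2]

lemma commute_aeval {A B : Matrix n n ℝ} (hAB : Commute A B) (p : ℝ[X]) :
    Commute (aeval A p) B := by
  induction p using Polynomial.induction_on' with
  | add p q hp hq => rw [map_add]; exact hp.add_left hq
  | monomial k a =>
      rw [aeval_monomial]
      have h1 : Commute (algebraMap ℝ (Matrix n n ℝ) a) B := Algebra.commutes a B
      exact h1.mul_left (hAB.pow_left k)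

lemma commute_sqrt {A B : Matrix n n ℝ} (hA : A.PosSemidef) (hAB : Commute A B) :
    Commute hA.sqrt B := by
  classical
  obtain ⟨hu1, hu2⟩ := Unitary.mem_iff.mp hA.1.eigenvectorUnitary.2
  let U : Matrix n n ℝ := (hA.1.eigenvectorUnitary : Matrix n n ℝ)
  let ev : n → ℝ := hA.1.eigenvalues
  let p : ℝ[X] := Lagrange.interpolate (Finset.univ.image ev) id Real.sqrt
  have hval : ∀ i : n, p.eval (ev i) = Real.sqrt (ev i) := by
    intro i
    have := Lagrange.eval_interpolate_at_node (v := (id : ℝ → ℝ)) (r := Real.sqrt)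
      (s := Finset.univ.image ev) (Set.injOn_id _) (Finset.mem_image_of_mem ev (Finset.mem_univ i))
    simpa [p] using this
  have hdiag : aeval (Matrix.diagonal ev) p = Matrix.diagonal (Real.sqrt ∘ ev) := by
    have hd : (Matrix.diagonal ev : Matrix n n ℝ) = Matrix.diagonalAlgHom ℝ ev := rfl
    have hpt : aeval ev p = Real.sqrt ∘ ev := by
      funext i
      have := aeval_algHom_apply (Pi.evalAlgHom ℝ (fun _ : n => ℝ) i) ev p
      simp only [Pi.evalAlgHom_apply] at this
      rw [← this, coe_aeval_eq_eval, hval]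
      rfl
    rw [hd, aeval_algHom_apply, hpt]
    rfl
  have hsp : A = conjA U hu1 hu2 (Matrix.diagonal ev) := by
    have := hA.1.spectral_theorem
    simpa [conjA, Unitary.conjStarAlgAut_apply, RCLike.ofReal_real_eq_id, U, ev] using this
  have hstep : aeval A p = U * Matrix.diagonal (Real.sqrt ∘ ev) * star U := by
    conv_lhs => rw [hsp]
    rw [aeval_algHom_apply, hdiag]
    rfl
  have hkey : aeval A p = hA.sqrt := by
    rw [hstep, Matrix.PosSemidef.sqrt]
  rw [← hkey]
  exact commute_aeval hAB p



lemma posDef_of_posSemidef_isUnit_det {A : Matrix n n ℝ} (hA : A.PosSemidef)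
    (h : IsUnit A.det) : A.PosDef := by
  have hA' := Matrix.posSemidef_iff_dotProduct_mulVec.mp hA
  refine Matrix.posDef_iff_dotProduct_mulVec.mpr ⟨hA.1, fun x hx => lt_of_le_of_ne (hA'.2 x) fun h0 => hx ?_⟩
  have hAx : A *ᵥ x = 0 := (hA.dotProduct_mulVec_zero_iff x).mp h0.symm
  have : A⁻¹ *ᵥ (A *ᵥ x) = x := by
    rw [Matrix.mulVec_mulVec, Matrix.nonsing_inv_mul A h, Matrix.one_mulVec]
  rw [hAx, Matrix.mulVec_zero] at this
  exact this.symm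

lemma posDef_smul {A : Matrix n n ℝ} (hA : A.PosDef) {c : ℝ} (hc : 0 < c) :
    (c • A).PosDef := by
  refine Matrix.posDef_iff_dotProduct_mulVec.mpr ⟨?_, fun x hx => ?_⟩
  · have := hA.1
    unfold Matrix.IsHermitian at this ⊢
    rw [Matrix.conjTranspose_smul, this]
    congr 1
  · rw [Matrix.smul_mulVec, dotProduct_smul]
    exact mul_pos hc ((Matrix.posDef_iff_dotProduct_mulVec.mp hA).2 hx)

lemma posDef_conj {B : Matrix n n ℝ} (hB : B.PosDef) (C : Matrix n n ℝ)
    (hC : IsUnit C.det) : (C * B * Cᵀ).PosDef := by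
  have hpsd : (C * B * Cᵀ).PosSemidef := by
    have := hB.posSemidef.mul_mul_conjTranspose_same C
    rwa [Matrix.conjTranspose_eq_transpose_of_trivial] at this
  refine posDef_of_posSemidef_isUnit_det hpsd ?_
  rw [Matrix.det_mul, Matrix.det_mul, Matrix.det_transpose]
  exact (hC.mul hB.det_pos.ne'.isUnit).mul hC

lemma posDef_mul_transpose_self {γ : Matrix n n ℝ} (hγ : IsUnit γ.det) :
    (γ * γᵀ).PosDef := by
  have := posDef_conj (Matrix.PosDef.one (n := n) (R := ℝ)) γ hγ
  rwa [Matrix.mul_one] at this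

lemma transpose_eq_self_of_posSemidef {A : Matrix n n ℝ} (hA : A.PosSemidef) : Aᵀ = A := by
  rw [← Matrix.conjTranspose_eq_transpose_of_trivial]
  exact hA.1

end General

section RiccLemmas

variable {d : ℕ}

lemma one_add_conj_posDef {γ v : Matrix (Fin d) (Fin d) ℝ} (hv : v.PosSemidef) :
    (1 + γ * v * γᵀ).PosDef := by
  refine Matrix.PosDef.one.add_posSemidef ?_
  have := hv.mul_mul_conjTranspose_same γ
  rwa [Matrix.conjTranspose_eq_transpose_of_trivial] at this

lemma inv_factor {γ v : Matrix (Fin d) (Fin d) ℝ} (hγ : IsUnit γ.det)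
    (hv : v.PosSemidef) :
    ((γ * γᵀ)⁻¹ + v)⁻¹ = γ * (1 + γᵀ * v * γ)⁻¹ * γᵀ := by
  have hγT : IsUnit γᵀ.det := by rwa [Matrix.det_transpose]
  have hT : (1 + γᵀ * v * γ).PosDef := by
    have := one_add_conj_posDef (γ := γᵀ) hv
    rwa [Matrix.transpose_transpose] at this
  have hTdet : IsUnit (1 + γᵀ * v * γ).det :=
    (Matrix.isUnit_iff_isUnit_det _).mp hT.isUnit
  apply Matrix.inv_eq_right_inv
  have e1 : ((γ * γᵀ)⁻¹ + v) * γ = γᵀ⁻¹ * (1 + γᵀ * v * γ) := by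
    rw [Matrix.mul_inv_rev, Matrix.add_mul, Matrix.mul_add, Matrix.mul_one,
      Matrix.mul_assoc γᵀ⁻¹ γ⁻¹ γ, Matrix.nonsing_inv_mul γ hγ, Matrix.mul_one]
    congr 1
    rw [← Matrix.mul_assoc, ← Matrix.mul_assoc, Matrix.nonsing_inv_mul γᵀ hγT,
      Matrix.one_mul]
  rw [← Matrix.mul_assoc, ← Matrix.mul_assoc, e1,
    Matrix.mul_assoc γᵀ⁻¹ _ _, Matrix.mul_nonsing_inv _ hTdet, Matrix.mul_one,
    Matrix.nonsing_inv_mul γᵀ hγT]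

lemma psim_posDef {γ v : Matrix (Fin d) (Fin d) ℝ} (hv : v.PosSemidef) :
    (Psim γ v).PosDef :=
  (one_add_conj_posDef hv).inv

lemma psim_psim {γ : Matrix (Fin d) (Fin d) ℝ} (hγ : IsUnit γ.det)
    {v : Matrix (Fin d) (Fin d) ℝ} (hv : v.PosSemidef) :
    Psim γ (Psim γᵀ v) = Ricc (γ * γᵀ)⁻¹ v := by
  unfold Psim Ricc
  rw [Matrix.transpose_transpose, inv_factor hγ hv]

lemma psim_psim' {γ : Matrix (Fin d) (Fin d) ℝ} (hγ : IsUnit γ.det)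
    {v : Matrix (Fin d) (Fin d) ℝ} (hv : v.PosSemidef) :
    Psim γᵀ (Psim γ v) = Ricc (γᵀ * γ)⁻¹ v := by
  have hγT : IsUnit γᵀ.det := by rwa [Matrix.det_transpose]
  have := psim_psim (γ := γᵀ) hγT hv
  rwa [Matrix.transpose_transpose] at this

lemma ricc_posDef {ϖ s : Matrix (Fin d) (Fin d) ℝ} (hϖ : ϖ.PosDef)
    (hs : s.PosSemidef) : (Ricc ϖ s).PosDef := by
  have h1 : (ϖ + s).PosDef := hϖ.add_posSemidef hs
  exact (Matrix.PosDef.one.add_posSemidef h1.inv.posSemidef).inv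

lemma q_posDef {ϖ : Matrix (Fin d) (Fin d) ℝ} (hϖ : ϖ.PosDef) :
    (ϖ + ((1 / 2 : ℝ) • ϖ) ^ 2).PosDef := by
  refine hϖ.add_posSemidef ?_
  have hh : ((1 / 2 : ℝ) • ϖ).PosDef := posDef_smul hϖ (by norm_num)
  have ht : ((1 / 2 : ℝ) • ϖ)ᵀ = (1 / 2 : ℝ) • ϖ :=
    transpose_eq_self_of_posSemidef hh.posSemidef
  have : ((1 / 2 : ℝ) • ϖ) ^ 2 = ((1 / 2 : ℝ) • ϖ)ᴴ * ((1 / 2 : ℝ) • ϖ) := by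
    rw [pow_two, Matrix.conjTranspose_eq_transpose_of_trivial, ht]
  rw [this]
  exact Matrix.posSemidef_conjTranspose_mul_self _

lemma fix_core {ϖ h m : Matrix (Fin d) (Fin d) ℝ}
    (hmm : m * m = ϖ + h ^ 2) (hmh : Commute m h) :
    (-h + m) * (h + m) = ϖ ∧ (h + m) * (-h + m) = ϖ := by
  constructor
  · have expand : (-h + m) * (h + m) = m * m - h * h + (m * h - h * m) := by noncomm_ring
    rw [expand, hmh.eq, sub_self, add_zero, hmm, pow_two]
    abel
  · have expand : (h + m) * (-h + m) = m * m - h * h + (h * m - m * h) := by noncomm_ring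
    rw [expand, ← hmh.eq, sub_self, add_zero, hmm, pow_two]
    abel

lemma riccFix_spec {ϖ : Matrix (Fin d) (Fin d) ℝ} (hϖ : ϖ.PosDef) :
    (riccFix ϖ).PosDef ∧ Ricc ϖ (riccFix ϖ) = riccFix ϖ := by
  have hϖdet := (Matrix.isUnit_iff_isUnit_det _).mp hϖ.isUnit
  have hh : ((1 / 2 : ℝ) • ϖ).PosDef := posDef_smul hϖ (by norm_num)
  have hq : (ϖ + ((1 / 2 : ℝ) • ϖ) ^ 2).PosDef := q_posDef hϖ
  have hmsqrt : msqrt (ϖ + ((1 / 2 : ℝ) • ϖ) ^ 2) = hq.posSemidef.sqrt := by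
    simp only [msqrt]
    rw [dif_pos hq.posSemidef]
    rfl
  have hm_psd : (hq.posSemidef.sqrt).PosSemidef := hq.posSemidef.posSemidef_sqrt
  have hmm : hq.posSemidef.sqrt * hq.posSemidef.sqrt = ϖ + ((1 / 2 : ℝ) • ϖ) ^ 2 :=
    hq.posSemidef.sqrt_mul_self
  have hqϖ : Commute (ϖ + ((1 / 2 : ℝ) • ϖ) ^ 2) ϖ :=
    (Commute.refl ϖ).add_left (((Commute.refl ϖ).smul_left _).pow_left 2)
  have hmϖ : Commute hq.posSemidef.sqrt ϖ := commute_sqrt hq.posSemidef hqϖ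
  have hmh : Commute hq.posSemidef.sqrt ((1 / 2 : ℝ) • ϖ) := hmϖ.smul_right _
  have hcore := fix_core (ϖ := ϖ) hmm hmh
  have hr_def : riccFix ϖ = -((1 / 2 : ℝ) • ϖ) + hq.posSemidef.sqrt := by
    simp only [riccFix]
    rw [hmsqrt]
  have hϖhh : ϖ + riccFix ϖ = (1 / 2 : ℝ) • ϖ + hq.posSemidef.sqrt := by
    rw [hr_def]
    module
  have hB : ((1 / 2 : ℝ) • ϖ + hq.posSemidef.sqrt).PosDef := hh.add_posSemidef hm_psd
  have hBdet := (Matrix.isUnit_iff_isUnit_det _).mp hB.isUnit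
  have hrB : riccFix ϖ * ((1 / 2 : ℝ) • ϖ + hq.posSemidef.sqrt) = ϖ := by
    rw [hr_def]; exact hcore.1
  have hBr : ((1 / 2 : ℝ) • ϖ + hq.posSemidef.sqrt) * riccFix ϖ = ϖ := by
    rw [hr_def]; exact hcore.2
  set B := (1 / 2 : ℝ) • ϖ + hq.posSemidef.sqrt with hB_def
  constructor
  · -- positive definiteness
    set c := hϖ.posSemidef.sqrt with hc_def
    have hcc : c * c = ϖ := hϖ.posSemidef.sqrt_mul_self
    have hcT : cᵀ = c := transpose_eq_self_of_posSemidef hϖ.posSemidef.posSemidef_sqrt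
    have hcdet : IsUnit c.det := by
      have : IsUnit (c.det * c.det) := by
        rw [← Matrix.det_mul, hcc]; exact hϖdet
      exact isUnit_of_mul_isUnit_left this
    have hϖB : Commute ϖ B := ((Commute.refl ϖ).smul_right _).add_right hmϖ.symm
    have hcB : Commute c B := commute_sqrt hϖ.posSemidef hϖB
    have hcBinv : c * B⁻¹ = B⁻¹ * c := by
      calc c * B⁻¹ = B⁻¹ * B * (c * B⁻¹) := by
            rw [Matrix.nonsing_inv_mul _ hBdet, Matrix.one_mul]
        _ = B⁻¹ * (B * c) * B⁻¹ := by
            rw [Matrix.mul_assoc, Matrix.mul_assoc, Matrix.mul_assoc]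
        _ = B⁻¹ * (c * B) * B⁻¹ := by rw [hcB.eq]
        _ = B⁻¹ * c * (B * B⁻¹) := by
            rw [Matrix.mul_assoc, Matrix.mul_assoc, Matrix.mul_assoc]
        _ = B⁻¹ * c := by rw [Matrix.mul_nonsing_inv _ hBdet, Matrix.mul_one]
    have h1 : riccFix ϖ = ϖ * B⁻¹ := by
      calc riccFix ϖ = riccFix ϖ * (B * B⁻¹) := by
            rw [Matrix.mul_nonsing_inv _ hBdet, Matrix.mul_one]
        _ = riccFix ϖ * B * B⁻¹ := by rw [Matrix.mul_assoc]
        _ = ϖ * B⁻¹ := by rw [hrB]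
    have h2 : c * B⁻¹ * cᵀ = ϖ * B⁻¹ := by
      rw [hcT, Matrix.mul_assoc, ← hcBinv, ← Matrix.mul_assoc, hcc]
    have hrform : riccFix ϖ = c * B⁻¹ * cᵀ := h1.trans h2.symm
    rw [hrform]
    exact posDef_conj hB.inv c hcdet
  · -- fixed point
    simp only [Ricc]
    rw [hϖhh]
    apply Matrix.inv_eq_right_inv
    have key : B * ((1 + B⁻¹) * riccFix ϖ) = B := by
      rw [← Matrix.mul_assoc, Matrix.mul_add, Matrix.mul_one,
        Matrix.mul_nonsing_inv _ hBdet, Matrix.add_mul, Matrix.one_mul, hBr]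
      exact hϖhh
    calc (1 + B⁻¹) * riccFix ϖ = B⁻¹ * (B * ((1 + B⁻¹) * riccFix ϖ)) := by
          rw [← Matrix.mul_assoc, Matrix.nonsing_inv_mul _ hBdet, Matrix.one_mul]
      _ = B⁻¹ * B := by rw [key]
      _ = 1 := Matrix.nonsing_inv_mul _ hBdet

lemma riccFix_unique {ϖ s : Matrix (Fin d) (Fin d) ℝ} (hϖ : ϖ.PosDef) (hs : s.PosDef)
    (hfix : Ricc ϖ s = s) : s = riccFix ϖ := by
  have hB : (ϖ + s).PosDef := hϖ.add_posSemidef hs.posSemidef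
  have hBdet := (Matrix.isUnit_iff_isUnit_det _).mp hB.isUnit
  have hX : (1 + (ϖ + s)⁻¹).PosDef := Matrix.PosDef.one.add_posSemidef hB.inv.posSemidef
  have hXdet := (Matrix.isUnit_iff_isUnit_det _).mp hX.isUnit
  have hsdet := (Matrix.isUnit_iff_isUnit_det _).mp hs.isUnit
  have hsT : sᵀ = s := transpose_eq_self_of_posSemidef hs.posSemidef
  have hϖT : ϖᵀ = ϖ := transpose_eq_self_of_posSemidef hϖ.posSemidef
  have hsinv : s⁻¹ = 1 + (ϖ + s)⁻¹ := by
    conv_lhs => rw [← hfix]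
    simp only [Ricc]
    rw [Matrix.nonsing_inv_nonsing_inv _ hXdet]
  have h1 : s * (1 + (ϖ + s)⁻¹) = 1 := by
    rw [← hsinv, Matrix.mul_nonsing_inv _ hsdet]
  have h4 : s * (ϖ + s)⁻¹ = 1 - s := by
    rw [Matrix.mul_add, Matrix.mul_one] at h1
    exact eq_sub_of_add_eq' h1
  have h5 : s * (ϖ + s)⁻¹ * (ϖ + s) = (1 - s) * (ϖ + s) := by rw [h4]
  rw [Matrix.mul_assoc, Matrix.nonsing_inv_mul _ hBdet, Matrix.mul_one,
    Matrix.sub_mul, Matrix.one_mul, Matrix.mul_add] at h5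
  have E1 : s * ϖ + s * s = ϖ := by
    rw [eq_sub_iff_add_eq, add_comm s (s * ϖ + s * s)] at h5
    exact add_right_cancel h5
  have E2 : ϖ * s + s * s = ϖ := by
    have := congrArg Matrix.transpose E1
    rwa [Matrix.transpose_add, Matrix.transpose_mul, Matrix.transpose_mul,
      hsT, hϖT] at this
  have hcom : s * ϖ = ϖ * s := by
    have := E1.trans E2.symm
    exact add_right_cancel this
  have hq : (ϖ + ((1 / 2 : ℝ) • ϖ) ^ 2).PosDef := q_posDef hϖ
  have hmsqrt : msqrt (ϖ + ((1 / 2 : ℝ) • ϖ) ^ 2) = hq.posSemidef.sqrt := by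
    simp only [msqrt]
    rw [dif_pos hq.posSemidef]
    rfl
  have hsq_eq : (s + (1 / 2 : ℝ) • ϖ) ^ 2 = ϖ + ((1 / 2 : ℝ) • ϖ) ^ 2 := by
    have expandgen : ∀ h : Matrix (Fin d) (Fin d) ℝ,
        (s + h) ^ 2 = s * s + (s * h + h * s) + h ^ 2 := fun h => by noncomm_ring
    have expand := expandgen ((1 / 2 : ℝ) • ϖ)
    have hmid : s * ((1 / 2 : ℝ) • ϖ) + ((1 / 2 : ℝ) • ϖ) * s = s * ϖ := by
      rw [mul_smul_comm, smul_mul_assoc, ← hcom, ← add_smul]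
      norm_num
    rw [expand, hmid]
    have hE : s * s + s * ϖ = ϖ := by rw [add_comm]; exact E1
    rw [hE]
  have hsh_psd : (s + (1 / 2 : ℝ) • ϖ).PosSemidef :=
    (hs.add (posDef_smul hϖ (by norm_num))).posSemidef
  have heq : s + (1 / 2 : ℝ) • ϖ = hq.posSemidef.sqrt :=
    hsh_psd.eq_sqrt_of_sq_eq hq.posSemidef hsq_eq
  simp only [riccFix]
  rw [hmsqrt, ← heq]
  abel

end RiccLemmas

end PsiRicc

/-- factorization and conjugation formulas relating the maps
`Ψ_γ` and the Riccati maps `Ricc_{ψ(γ)}`, together with their fixed points. -/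

theorem psi_riccati_factorization
    (d : ℕ) (γ : Matrix (Fin d) (Fin d) ℝ) (hγ : IsUnit γ.det) :
    (∀ v : Matrix (Fin d) (Fin d) ℝ, v.PosSemidef →
      Psim γ (Psim γ.transpose v) = Ricc (γ * γ.transpose)⁻¹ v) ∧
    (∀ (n : ℕ) (v : Matrix (Fin d) (Fin d) ℝ), v.PosSemidef →
      Psim γ.transpose ((Ricc (γ * γ.transpose)⁻¹)^[n] v) =
        (Ricc (γ.transpose * γ)⁻¹)^[n] (Psim γ.transpose v)) ∧
    Psim γ.transpose (riccFix (γ * γ.transpose)⁻¹) = riccFix (γ.transpose * γ)⁻¹ := by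
  classical
  have hγT : IsUnit γ.transpose.det := by rwa [Matrix.det_transpose]
  have hϖ : ((γ * γ.transpose)⁻¹).PosDef := (PsiRicc.posDef_mul_transpose_self hγ).inv
  have hϖ' : ((γ.transpose * γ)⁻¹).PosDef := by
    have := (PsiRicc.posDef_mul_transpose_self hγT).inv
    rwa [Matrix.transpose_transpose] at this
  refine ⟨fun v hv => PsiRicc.psim_psim hγ hv, ?_, ?_⟩
  · intro n v hv
    induction n with
    | zero => simp
    | succ n ih =>
      have hiter : ((Ricc (γ * γ.transpose)⁻¹)^[n] v).PosSemidef := by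
        clear ih
        induction n with
        | zero => exact hv
        | succ k ihk =>
          rw [Function.iterate_succ_apply']
          exact (PsiRicc.ricc_posDef hϖ ihk).posSemidef
      rw [Function.iterate_succ_apply', Function.iterate_succ_apply', ← ih,
        ← PsiRicc.psim_psim hγ hiter]
      exact PsiRicc.psim_psim' hγ (PsiRicc.psim_posDef hiter).posSemidef
  · have hr := PsiRicc.riccFix_spec hϖ
    have hs : (Psim γ.transpose (riccFix (γ * γ.transpose)⁻¹)).PosDef :=
      PsiRicc.psim_posDef hr.1.posSemidef
    refine PsiRicc.riccFix_unique hϖ' hs ?_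
    calc Ricc (γ.transpose * γ)⁻¹ (Psim γ.transpose (riccFix (γ * γ.transpose)⁻¹))
        = Psim γ.transpose (Psim γ (Psim γ.transpose (riccFix (γ * γ.transpose)⁻¹))) :=
          (PsiRicc.psim_psim' hγ (PsiRicc.psim_posDef hr.1.posSemidef).posSemidef).symm
      _ = Psim γ.transpose (Ricc (γ * γ.transpose)⁻¹ (riccFix (γ * γ.transpose)⁻¹)) := by
          rw [PsiRicc.psim_psim hγ hr.1.posSemidef]
      _ = Psim γ.transpose (riccFix (γ * γ.transpose)⁻¹) := by rw [hr.2]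
end
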